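/- arXiv:2603.18254 — 3 statements merged into one kernel-verified Lean document; each statement's English description precedes it below -/
import Mathlib

section
/- Let Y ∼ N(0,1), let c ∈ ℝ with |c| ≥ 1, and let h_k denote the normalized probabilist's Hermite polynomials (orthonormal in L²(N(0,1))). Then for every k ≥ 0, E[h_k(cY)²] ≤ 2·(4c²)^k. -/
/-!
Put `A(n, m) = E[Heₙ(cY) Heₘ(cY)]` for the unnormalized Hermite polynomials `Heₙ`. Gaussian
integration by parts `E[Y P(Y)] = E[P'(Y)]`, together with `Heₙ₊₁ = x Heₙ - n Heₙ₋₁` and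
`Heₙ' = n Heₙ₋₁`, gives the recurrence
`A(n + 1, m) = (c² - 1) n A(n - 1, m) + c² m A(n, m - 1)`.
Since `0 ≤ c² - 1 ≤ c²`, induction on `n + m` yields `|A(n, m)| ≤ √((4c²)^(n+m) n! m!)`, and
the diagonal case divided by `k!` bounds `E[h_k(cY)²]` by `(4c²)^k`.
-/

open MeasureTheory ProbabilityTheory

/-- The normalized probabilist's Hermite polynomials, orthonormal in
`L²(N(0,1))`. -/
noncomputable def hermiteN (k : ℕ) (x : ℝ) : ℝ :=
  (Polynomial.aeval x (Polynomial.hermite k)) / Real.sqrt (Nat.factorial k)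

open Polynomial Real Nat
open scoped NNReal

namespace ProbabilityTheory

lemma hasDerivAt_gaussianPDFReal (μ : ℝ) (v : ℝ≥0) (x : ℝ) :
    HasDerivAt (gaussianPDFReal μ v) (-((x - μ) / v) * gaussianPDFReal μ v x) x := by
  have h : HasDerivAt (fun x => -(x - μ) ^ 2 / (2 * v)) (-((x - μ) / v)) x :=
    ((((hasDerivAt_id x).sub_const μ).pow 2).neg.div_const (2 * (v : ℝ))).congr_deriv
      (by simp only [id, Nat.cast_ofNat]; ring)
  exact (h.exp.const_mul (√(2 * π * v))⁻¹).congr_deriv (by rw [gaussianPDFReal]; ring)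

variable {μ : ℝ} {v : ℝ≥0}

lemma integrable_eval_gaussianReal (P : ℝ[X]) :
    Integrable (fun x => P.eval x) (gaussianReal μ v) := by
  simp_rw [eval_eq_sum_range]
  exact integrable_finsetSum _ fun i _ => (integrable_pow_of_mem_interior_integrableExpSet
    (X := fun x => x) (by simp) i).const_mul _

lemma integrable_gaussianPDFReal_mul_eval (hv : v ≠ 0) (P : ℝ[X]) :
    Integrable (fun x => gaussianPDFReal μ v x * P.eval x) := by
  have := integrable_eval_gaussianReal (μ := μ) (v := v) P
  rw [gaussianReal_of_var_ne_zero μ hv, integrable_withDensity_iff (measurable_gaussianPDF μ v)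
    (ae_of_all _ fun _ => gaussianPDF_lt_top)] at this
  simpa [toReal_gaussianPDF, mul_comm] using this

lemma integral_sub_mul_eval_gaussianReal (hv : v ≠ 0) (P : ℝ[X]) :
    ∫ x, (x - μ) * P.eval x ∂gaussianReal μ v =
      v * ∫ x, (derivative P).eval x ∂gaussianReal μ v := by
  have key := integral_mul_deriv_eq_deriv_mul_of_integrable (u := fun x => P.eval x)
    (v := gaussianPDFReal μ v) (fun x _ => P.hasDerivAt x)
    (fun x _ => hasDerivAt_gaussianPDFReal μ v x)
    ((integrable_gaussianPDFReal_mul_eval (μ := μ) hv (-(C (v : ℝ)⁻¹ * (X - C μ) * P))).congr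
      (ae_of_all _ fun x => by simp; ring))
    ((integrable_gaussianPDFReal_mul_eval (μ := μ) hv (derivative P)).congr
      (ae_of_all _ fun x => by simp [mul_comm]))
    ((integrable_gaussianPDFReal_mul_eval (μ := μ) hv P).congr
      (ae_of_all _ fun x => by simp [mul_comm]))
  rw [integral_gaussianReal_eq_integral_smul hv, integral_gaussianReal_eq_integral_smul hv]
  calc ∫ x, gaussianPDFReal μ v x • ((x - μ) * P.eval x)
      = ∫ x, -(v : ℝ) * (P.eval x * (-((x - μ) / v) * gaussianPDFReal μ v x)) := by
        congr 1 with x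
        rw [smul_eq_mul]
        field_simp
    _ = v * ∫ x, gaussianPDFReal μ v x • (derivative P).eval x := by
        simp_rw [integral_const_mul, key, smul_eq_mul, mul_comm (gaussianPDFReal μ v _)]
        ring

noncomputable def gaussianPolyExpectation (μ : ℝ) (v : ℝ≥0) : ℝ[X] →ₗ[ℝ] ℝ where
  toFun P := ∫ x, P.eval x ∂gaussianReal μ v
  map_add' P Q := by
    simp only [eval_add]
    exact integral_add (integrable_eval_gaussianReal P) (integrable_eval_gaussianReal Q)
  map_smul' a P := by simp only [eval_smul, smul_eq_mul, integral_const_mul, RingHom.id_apply]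

lemma gaussianPolyExpectation_apply (P : ℝ[X]) :
    gaussianPolyExpectation μ v P = ∫ x, P.eval x ∂gaussianReal μ v := rfl

lemma gaussianPolyExpectation_X_sub_C_mul (hv : v ≠ 0) (P : ℝ[X]) :
    gaussianPolyExpectation μ v ((X - C μ) * P) =
      v * gaussianPolyExpectation μ v (derivative P) := by
  simpa [gaussianPolyExpectation_apply] using integral_sub_mul_eval_gaussianReal hv P

lemma gaussianPolyExpectation_one : gaussianPolyExpectation μ v 1 = 1 := by
  simp [gaussianPolyExpectation_apply]

end ProbabilityTheory

namespace Polynomial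

theorem derivative_hermite_succ (n : ℕ) :
    derivative (hermite (n + 1)) = (n + 1 : ℤ[X]) * hermite n := by
  induction n with
  | zero => simp
  | succ n ih =>
    rw [hermite_succ (n + 1), derivative_sub, derivative_mul, derivative_X, ih, derivative_mul,
      hermite_succ n]
    simp only [Nat.cast_add, Nat.cast_one, derivative_add, derivative_natCast, derivative_one]
    ring

theorem derivative_hermite (n : ℕ) : derivative (hermite n) = (n : ℤ[X]) * hermite (n - 1) := by
  cases n with
  | zero => simp
  | succ n => simpa using derivative_hermite_succ n

theorem hermite_succ' (n : ℕ) : hermite (n + 1) = X * hermite n - (n : ℤ[X]) * hermite (n - 1) := by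
  rw [hermite_succ, derivative_hermite]

end Polynomial

noncomputable def scaledHermite (c : ℝ) (n : ℕ) : ℝ[X] :=
  ((hermite n).map (algebraMap ℤ ℝ)).comp (C c * X)

theorem eval_scaledHermite (c x : ℝ) (n : ℕ) :
    (scaledHermite c n).eval x = aeval (c * x) (hermite n) := by
  rw [scaledHermite, eval_comp, eval_mul, eval_C, eval_X, eval_map_algebraMap]

theorem derivative_scaledHermite (c : ℝ) (n : ℕ) :
    derivative (scaledHermite c n) = (c * n) • scaledHermite c (n - 1) := by
  simp only [scaledHermite, derivative_comp, derivative_map, derivative_hermite, derivative_mul,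
    derivative_C, derivative_X, Polynomial.map_mul, Polynomial.map_natCast, mul_comp,
    natCast_comp, smul_eq_C_mul, C_mul, C_eq_natCast]
  ring

theorem scaledHermite_succ (c : ℝ) (n : ℕ) :
    scaledHermite c (n + 1) = c • (X * scaledHermite c n) - (n : ℝ) • scaledHermite c (n - 1) := by
  simp only [scaledHermite, hermite_succ', Polynomial.map_sub, Polynomial.map_mul, map_X,
    Polynomial.map_natCast, sub_comp, mul_comp, X_comp, natCast_comp, smul_eq_C_mul, C_eq_natCast]
  ring

noncomputable def scaledHermiteCorr (c : ℝ) (n m : ℕ) : ℝ :=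
  gaussianPolyExpectation 0 1 (scaledHermite c n * scaledHermite c m)

lemma scaledHermiteCorr_comm (c : ℝ) (n m : ℕ) :
    scaledHermiteCorr c n m = scaledHermiteCorr c m n := by
  rw [scaledHermiteCorr, mul_comm, scaledHermiteCorr]

lemma scaledHermiteCorr_zero_zero (c : ℝ) : scaledHermiteCorr c 0 0 = 1 := by
  simp [scaledHermiteCorr, scaledHermite, gaussianPolyExpectation_one]

lemma scaledHermiteCorr_succ_left (c : ℝ) (n m : ℕ) :
    scaledHermiteCorr c (n + 1) m = (c ^ 2 - 1) * n * scaledHermiteCorr c (n - 1) m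
      + c ^ 2 * m * scaledHermiteCorr c n (m - 1) := by
  have stein : gaussianPolyExpectation 0 1 (X * (scaledHermite c n * scaledHermite c m))
      = c * n * scaledHermiteCorr c (n - 1) m + c * m * scaledHermiteCorr c n (m - 1) := by
    have h := gaussianPolyExpectation_X_sub_C_mul (μ := 0) one_ne_zero
      (scaledHermite c n * scaledHermite c m)
    rw [map_zero, sub_zero, NNReal.coe_one, one_mul] at h
    rw [h, derivative_mul, derivative_scaledHermite, derivative_scaledHermite, smul_mul_assoc,
      mul_smul_comm, map_add, map_smul, map_smul, smul_eq_mul, smul_eq_mul]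
    rfl
  rw [scaledHermiteCorr, scaledHermite_succ, sub_mul, smul_mul_assoc, smul_mul_assoc, mul_assoc,
    map_sub, map_smul, map_smul, stein, smul_eq_mul, smul_eq_mul, scaledHermiteCorr]
  ring

section CorrelationBound

variable {t : ℝ}

def corrBound (t : ℝ) (n m : ℕ) : ℝ := (4 * t) ^ (n + m) * n ! * m !

lemma corrBound_comm (t : ℝ) (n m : ℕ) : corrBound t n m = corrBound t m n := by
  rw [corrBound, corrBound, add_comm, mul_right_comm]

lemma corrBound_self (t : ℝ) (k : ℕ) : corrBound t k k = ((4 * t) ^ k * k !) ^ 2 := by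
  rw [corrBound, ← two_mul, pow_mul']
  ring

lemma sqrt_corrBound_succ_left (ht : 0 ≤ t) (n m : ℕ) :
    √(corrBound t (n + 1) m) = √(4 * t) * √(n + 1) * √(corrBound t n m) := by
  rw [← Real.sqrt_mul (by positivity), ← Real.sqrt_mul (by positivity)]
  congr 1
  simp only [corrBound, add_right_comm n 1 m, pow_succ, factorial_succ, cast_mul, cast_add,
    cast_one]
  ring

lemma sqrt_mul_natCast_mul_sqrt_corrBound_pred_left (ht : 0 ≤ t) (n m : ℕ) :
    √(4 * t) * (n * √(corrBound t (n - 1) m)) = √n * √(corrBound t n m) := by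
  rcases n with _ | n
  · simp
  · rw [add_tsub_cancel_right, sqrt_corrBound_succ_left ht, cast_add_one]
    linear_combination (-(√(4 * t) * √(corrBound t n m))) *
      Real.mul_self_sqrt (by positivity : (0 : ℝ) ≤ n + 1)

lemma sqrt_mul_natCast_mul_sqrt_corrBound_pred_right (ht : 0 ≤ t) (n m : ℕ) :
    √(4 * t) * (m * √(corrBound t n (m - 1))) = √m * √(corrBound t n m) := by
  rw [corrBound_comm t n, corrBound_comm t n, sqrt_mul_natCast_mul_sqrt_corrBound_pred_left ht]

variable (a : ℕ → ℕ → ℝ)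

lemma abs_succ_left_le_sqrt_corrBound (ht : 1 ≤ t)
    (h_succ : ∀ n m, a (n + 1) m = (t - 1) * n * a (n - 1) m + t * m * a n (m - 1))
    {n m : ℕ} (hm : m ≤ n + 1) (h₁ : |a (n - 1) m| ≤ √(corrBound t (n - 1) m))
    (h₂ : |a n (m - 1)| ≤ √(corrBound t n (m - 1))) :
    |a (n + 1) m| ≤ √(corrBound t (n + 1) m) := by
  have ht₀ : 0 ≤ t := by linarith
  have hK : 0 < √(4 * t) := Real.sqrt_pos.2 (by linarith)
  have hsqrt : √n + √m ≤ 2 * √(n + 1) := by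
    have h₁ : √n ≤ √(n + 1) := Real.sqrt_le_sqrt (by linarith)
    have h₂ : √m ≤ √(n + 1) := Real.sqrt_le_sqrt (by exact_mod_cast hm)
    linarith
  have htri : |a (n + 1) m| ≤
      t * (n * √(corrBound t (n - 1) m)) + t * (m * √(corrBound t n (m - 1))) := by
    rw [h_succ]
    refine (abs_add_le _ _).trans (add_le_add ?_ ?_)
    · have hn : (0 : ℝ) ≤ (t - 1) * n := by nlinarith [(n.cast_nonneg : (0 : ℝ) ≤ n)]
      rw [abs_mul, abs_of_nonneg hn]
      calc (t - 1) * n * |a (n - 1) m| ≤ (t - 1) * n * √(corrBound t (n - 1) m) := by gcongr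
        _ ≤ t * (n * √(corrBound t (n - 1) m)) := by
          nlinarith [mul_nonneg n.cast_nonneg (Real.sqrt_nonneg (corrBound t (n - 1) m))]
    · rw [abs_mul, abs_of_nonneg (by positivity : (0 : ℝ) ≤ t * m), mul_assoc]
      gcongr
  have hB : √(4 * t) * √(corrBound t (n + 1) m) = 4 * t * √(n + 1) * √(corrBound t n m) := by
    rw [sqrt_corrBound_succ_left ht₀, ← mul_assoc, ← mul_assoc, Real.mul_self_sqrt (by linarith)]
  refine le_of_mul_le_mul_left ?_ hK
  calc √(4 * t) * |a (n + 1) m|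
      ≤ t * (√(4 * t) * (n * √(corrBound t (n - 1) m)) +
          √(4 * t) * (m * √(corrBound t n (m - 1)))) := by
        nlinarith
    _ = t * (√n + √m) * √(corrBound t n m) := by
        rw [sqrt_mul_natCast_mul_sqrt_corrBound_pred_left ht₀,
          sqrt_mul_natCast_mul_sqrt_corrBound_pred_right ht₀]
        ring
    _ ≤ t * (2 * √(n + 1)) * √(corrBound t n m) := by gcongr
    _ ≤ √(4 * t) * √(corrBound t (n + 1) m) := by
        rw [hB]
        nlinarith [mul_nonneg (Real.sqrt_nonneg (n + 1 : ℝ)) (Real.sqrt_nonneg (corrBound t n m))]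

theorem abs_le_sqrt_corrBound (ht : 1 ≤ t) (h_comm : ∀ n m, a n m = a m n) (h_zero : |a 0 0| ≤ 1)
    (h_succ : ∀ n m, a (n + 1) m = (t - 1) * n * a (n - 1) m + t * m * a n (m - 1)) (n m : ℕ) :
    |a n m| ≤ √(corrBound t n m) := by
  induction hs : n + m using Nat.strong_induction_on generalizing n m with
  | _ s ih =>
  wlog hmn : m ≤ n generalizing n m
  · rw [h_comm, corrBound_comm]
    exact this m n (by omega) (by omega)
  rcases n with _ | n
  · obtain rfl : m = 0 := by omega
    simpa [corrBound] using h_zero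
  · exact abs_succ_left_le_sqrt_corrBound a ht h_succ (by omega) (ih _ (by omega) _ _ rfl)
      (ih _ (by omega) _ _ rfl)

end CorrelationBound

lemma integral_hermiteN_mul_sq_eq_scaledHermiteCorr (c : ℝ) (k : ℕ) :
    ∫ y, (hermiteN k (c * y)) ^ 2 ∂(gaussianReal 0 1) = scaledHermiteCorr c k k / k ! := by
  have hk : (0 : ℝ) ≤ k ! := by positivity
  rw [scaledHermiteCorr, gaussianPolyExpectation_apply, ← integral_div]
  congr 1 with y
  rw [hermiteN, div_pow, Real.sq_sqrt hk, sq, eval_mul, eval_scaledHermite]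

/-- Second moment of scaled Hermite polynomials: for `Y ∼ N(0,1)` and
`|c| ≥ 1`, `E[h_k(cY)²] ≤ 2·(4c²)^k`. -/
theorem hermite_scaled_second_moment (c : ℝ) (hc : 1 ≤ |c|) (k : ℕ) :
    (∫ y, (hermiteN k (c * y)) ^ 2 ∂(gaussianReal 0 1)) ≤ 2 * (4 * c ^ 2) ^ k := by
  have hc2 : 1 ≤ c ^ 2 := (one_le_sq_iff_one_le_abs c).2 hc
  have hcorr : scaledHermiteCorr c k k ≤ (4 * c ^ 2) ^ k * k ! := by
    have h := abs_le_sqrt_corrBound _ hc2 (scaledHermiteCorr_comm c)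
      (by rw [scaledHermiteCorr_zero_zero, abs_one]) (scaledHermiteCorr_succ_left c) k k
    rw [corrBound_self, Real.sqrt_sq (by positivity)] at h
    exact (le_abs_self _).trans h
  have hbound_nonneg : 0 ≤ (4 * c ^ 2) ^ k * k ! := by positivity
  rw [integral_hermiteN_mul_sq_eq_scaledHermiteCorr, div_le_iff₀ (by positivity)]
  linarith
end

section
/- Let η ∈ (0,1) and let s² = 1 + K²α² for constants K, α > 0 with α²K²/2 ≤ η. Define r₀(y) = (φ_s(y) − (1−η)φ₁(y))/η where φ_σ is the density of N(0, σ²). Then r₀(y) ≥ 0 for all y and ∫ r₀(y) dy = 1, i.e., r₀ is a valid probability density. Consequently N(0, s²) can be written as the mixture (1−η)·N(0,1) + η·r₀. -/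
open MeasureTheory ProbabilityTheory

/-- The replacement density `r₀ = (φ_s - (1-η)φ₁)/η` is a valid probability
density, where `s² = 1 + K²α²` and `α²K²/2 ≤ η`; consequently `N(0, s²)` is
the mixture `(1-η)·N(0,1) + η·r₀`. -/
theorem replacement_density_valid (η K α : ℝ) (hη : 0 < η) (hη1 : η < 1)
    (hK : 0 < K) (hα : 0 < α) (hcond : α ^ 2 * K ^ 2 / 2 ≤ η) :
    let s : ℝ := Real.sqrt (1 + K ^ 2 * α ^ 2)
    let φ : ℝ → ℝ → ℝ := fun σ y =>
      (1 / (σ * Real.sqrt (2 * Real.pi))) * Real.exp (-y ^ 2 / (2 * σ ^ 2))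
    let r0 : ℝ → ℝ := fun y => (φ s y - (1 - η) * φ 1 y) / η
    (∀ y : ℝ, 0 ≤ r0 y) ∧
    ((∫ y : ℝ, r0 y) = 1) ∧
    gaussianReal 0 (Real.toNNReal (1 + K ^ 2 * α ^ 2))
      = ENNReal.ofReal (1 - η) • gaussianReal 0 1
        + ENNReal.ofReal η •
            (volume.withDensity fun y => ENNReal.ofReal (r0 y)) := by
  intro s φ r0
  have hV : (0:ℝ) < 1 + K ^ 2 * α ^ 2 := by positivity
  have hs1 : 1 ≤ s := by
    rw [show (1:ℝ) = Real.sqrt 1 by simp]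
    exact Real.sqrt_le_sqrt (by nlinarith [sq_nonneg K, sq_nonneg α])
  have hs0 : 0 < s := lt_of_lt_of_le one_pos hs1
  have hs2 : s ^ 2 = 1 + K ^ 2 * α ^ 2 := Real.sq_sqrt hV.le
  set v : NNReal := Real.toNNReal (1 + K ^ 2 * α ^ 2) with hvdef
  have hvc : (v : ℝ) = 1 + K ^ 2 * α ^ 2 := Real.coe_toNNReal _ hV.le
  have hv0 : v ≠ 0 := by
    intro h
    rw [h] at hvc
    simp at hvc
    nlinarith
  have hπ : (0:ℝ) < Real.sqrt (2 * Real.pi) := Real.sqrt_pos.mpr (by positivity)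
  have hφs : ∀ y, φ s y = gaussianPDFReal 0 v y := by
    intro y
    simp only [φ, gaussianPDFReal, sub_zero]
    rw [hvc, ← hs2, Real.sqrt_mul (by positivity : (0:ℝ) ≤ 2 * Real.pi),
      Real.sqrt_sq hs0.le, one_div, mul_comm (Real.sqrt (2 * Real.pi)) s]
  have hφ1 : ∀ y, φ 1 y = gaussianPDFReal 0 1 y := by
    intro y
    simp only [φ, gaussianPDFReal, sub_zero, NNReal.coe_one, mul_one, one_mul, one_pow, one_div]
  have hinv : 1 - η ≤ 1 / s := by
    rw [le_div_iff₀ hs0]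
    nlinarith [sq_nonneg (s - 1)]
  -- nonnegativity
  have hnn : ∀ y : ℝ, 0 ≤ r0 y := by
    intro y
    apply div_nonneg _ hη.le
    rw [sub_nonneg]
    have h1 : Real.exp (-y ^ 2 / (2 * 1 ^ 2)) ≤ Real.exp (-y ^ 2 / (2 * s ^ 2)) := by
      apply Real.exp_le_exp.mpr
      rw [one_pow, mul_one, neg_div, neg_div, neg_le_neg_iff]
      apply div_le_div_of_nonneg_left (sq_nonneg y) (by positivity)
      nlinarith
    have key : (1 - η) * Real.exp (-y ^ 2 / (2 * 1 ^ 2))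
        ≤ (1 / s) * Real.exp (-y ^ 2 / (2 * s ^ 2)) :=
      mul_le_mul hinv h1 (Real.exp_pos _).le (by positivity)
    simp only [φ]
    calc (1 - η) * ((1 / (1 * Real.sqrt (2 * Real.pi))) * Real.exp (-y ^ 2 / (2 * 1 ^ 2)))
        = (1 / Real.sqrt (2 * Real.pi)) * ((1 - η) * Real.exp (-y ^ 2 / (2 * 1 ^ 2))) := by
          ring
      _ ≤ (1 / Real.sqrt (2 * Real.pi)) * ((1 / s) * Real.exp (-y ^ 2 / (2 * s ^ 2))) :=
          mul_le_mul_of_nonneg_left key (by positivity)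
      _ = (1 / (s * Real.sqrt (2 * Real.pi))) * Real.exp (-y ^ 2 / (2 * s ^ 2)) := by
          field_simp
  -- integrability and integrals
  have hfs : (fun y => φ s y) = gaussianPDFReal 0 v := funext hφs
  have hf1 : (fun y => φ 1 y) = gaussianPDFReal 0 1 := funext hφ1
  have hint_s : Integrable (fun y => φ s y) := by rw [hfs]; exact integrable_gaussianPDFReal 0 v
  have hint_1 : Integrable (fun y => φ 1 y) := by rw [hf1]; exact integrable_gaussianPDFReal 0 1
  have hI_s : (∫ y, φ s y) = 1 := by rw [hfs]; exact integral_gaussianPDFReal_eq_one 0 hv0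
  have hI_1 : (∫ y, φ 1 y) = 1 := by rw [hf1]; exact integral_gaussianPDFReal_eq_one 0 one_ne_zero
  have hInt : (∫ y : ℝ, r0 y) = 1 := by
    have : (∫ y : ℝ, r0 y) = η⁻¹ * ∫ y : ℝ, (φ s y - (1 - η) * φ 1 y) := by
      rw [← integral_const_mul]
      congr 1
      funext y
      simp only [r0]
      ring
    rw [this, integral_sub hint_s (hint_1.const_mul _), hI_s, integral_const_mul, hI_1]
    field_simp
    ring
  refine ⟨hnn, hInt, ?_⟩
  -- measure identity
  have hmeas_r0 : Measurable fun y => ENNReal.ofReal (r0 y) := by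
    simp only [r0, φ]
    fun_prop
  rw [gaussianReal_of_var_ne_zero 0 hv0, gaussianReal_of_var_ne_zero 0 one_ne_zero,
    ← withDensity_smul _ (measurable_gaussianPDF 0 1), ← withDensity_smul _ hmeas_r0,
    ← withDensity_add_left ((measurable_gaussianPDF 0 1).const_smul _)]
  congr 1
  funext y
  simp only [Pi.add_apply, Pi.smul_apply, smul_eq_mul, gaussianPDF]
  rw [← ENNReal.ofReal_mul (by linarith), ← ENNReal.ofReal_mul hη.le,
    ← ENNReal.ofReal_add (by nlinarith [gaussianPDFReal_nonneg 0 1 y])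
      (mul_nonneg hη.le (hnn y))]
  congr 1
  rw [← hφs y, ← hφ1 y]
  simp only [r0]
  field_simp
  ring
end

section
/- Let x₁,…,xₙ ∈ ℝ^d with mean x̄ = (1/n)∑ᵢ xᵢ, let η ∈ [0, 1/2) be bounded away from 1/2, and suppose two sequences (y₁,…,yₙ) and (y₁′,…,yₙ′) each differ from a common corrupted dataset on at most ηn indices (so they differ from each other on a set S with |S| ≤ 2ηn), and each satisfies: for all subsets T ⊆ [n] with |T| ≤ 2ηn, ‖(1/|T|)∑_{i∈T}(y_i − ȳ)‖₂ ≤ B (and likewise for y′ with its mean ȳ′). Then ‖ȳ − ȳ′‖₂ ≤ 4ηB/(1 − 2η). -/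
open Finset

set_option maxHeartbeats 1600000

/-- Resilience implies closeness of means: if two sequences `y, y'` in `ℝ^d`
differ on a set of at most `2ηn` indices and each is `(2ηn, B)`-resilient
around its own mean (every subset of size at most `2ηn` has average deviation
from the mean bounded by `B`), then the two means are within
`4ηB/(1 - 2η)` of each other. -/
theorem resilience_mean_closeness {d n : ℕ} (hn : 0 < n) (η B : ℝ)
    (hη0 : 0 ≤ η) (hη : η < 1 / 2)
    (y y' : Fin n → EuclideanSpace ℝ (Fin d))
    (hdiff : (({i : Fin n | y i ≠ y' i} : Set (Fin n)).ncard : ℝ) ≤ 2 * η * n)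
    (hres : ∀ T : Finset (Fin n), (T.card : ℝ) ≤ 2 * η * n →
      ‖(T.card : ℝ)⁻¹ • ∑ i ∈ T, (y i - (n : ℝ)⁻¹ • ∑ j, y j)‖ ≤ B)
    (hres' : ∀ T : Finset (Fin n), (T.card : ℝ) ≤ 2 * η * n →
      ‖(T.card : ℝ)⁻¹ • ∑ i ∈ T, (y' i - (n : ℝ)⁻¹ • ∑ j, y' j)‖ ≤ B) :
    ‖(n : ℝ)⁻¹ • ∑ i, y i - (n : ℝ)⁻¹ • ∑ i, y' i‖ ≤ 4 * η * B / (1 - 2 * η) := by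
  classical
  have hn0 : (n : ℝ) ≠ 0 := Nat.cast_ne_zero.mpr hn.ne'
  have hnpos : (0 : ℝ) < n := Nat.cast_pos.mpr hn
  set S : Finset (Fin n) := univ.filter (fun i => y i ≠ y' i) with hSdef
  have hSset : ({i : Fin n | y i ≠ y' i} : Set (Fin n)) = ↑S := by
    ext i; simp [hSdef]
  have hc : (S.card : ℝ) ≤ 2 * η * n := by
    rwa [hSset, Set.ncard_coe_finset] at hdiff
  have hB : 0 ≤ B := by
    have h0 : ((∅ : Finset (Fin n)).card : ℝ) ≤ 2 * η * n := by
      simpa using mul_nonneg (mul_nonneg (by norm_num : (0:ℝ) ≤ 2) hη0)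
        (Nat.cast_nonneg n)
    simpa using hres ∅ h0
  set ybar := (n : ℝ)⁻¹ • ∑ j, y j with hybar
  set ybar' := (n : ℝ)⁻¹ • ∑ j, y' j with hybar'
  set A := ∑ i ∈ S, (y i - ybar) with hA
  set A' := ∑ i ∈ S, (y' i - ybar') with hA'
  -- key identity
  have h1 : ∑ i ∈ S, (y i - y' i) = (n : ℝ) • (ybar - ybar') := by
    have : ∑ i ∈ S, (y i - y' i) = ∑ i, (y i - y' i) := by
      refine Finset.sum_subset (subset_univ S) ?_
      intro i _ hi
      simp only [hSdef, mem_filter, mem_univ, true_and, not_not] at hi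
      exact sub_eq_zero.mpr hi
    rw [this, Finset.sum_sub_distrib, hybar, hybar', smul_sub,
      smul_inv_smul₀ hn0, smul_inv_smul₀ hn0]
  have h2 : ∑ i ∈ S, (y i - y' i) = A - A' + (S.card : ℝ) • (ybar - ybar') := by
    rw [hA, hA', Finset.sum_sub_distrib, Finset.sum_sub_distrib,
      Finset.sum_sub_distrib, Finset.sum_const, Finset.sum_const]
    simp only [Nat.cast_smul_eq_nsmul ℝ, smul_sub]
    abel
  have key : ((n : ℝ) - S.card) • (ybar - ybar') = A - A' := by
    have := h1.symm.trans h2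
    rw [sub_smul]
    have h3 : (n : ℝ) • (ybar - ybar') - (S.card : ℝ) • (ybar - ybar')
        = A - A' := by
      rw [this]; abel
    exact h3
  -- bounds on A, A'
  have normA : ‖A‖ ≤ (S.card : ℝ) * B := by
    rcases Nat.eq_zero_or_pos S.card with h0 | hpos
    · have : S = ∅ := Finset.card_eq_zero.mp h0
      simp [hA, this]
    · have hcpos : (0 : ℝ) < S.card := Nat.cast_pos.mpr hpos
      have := hres S hc
      rw [norm_smul, norm_inv, Real.norm_natCast] at this
      calc ‖A‖ = (S.card : ℝ) * ((S.card : ℝ)⁻¹ * ‖A‖) := by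
            field_simp
        _ ≤ (S.card : ℝ) * B := by
            exact mul_le_mul_of_nonneg_left this hcpos.le
  have normA' : ‖A'‖ ≤ (S.card : ℝ) * B := by
    rcases Nat.eq_zero_or_pos S.card with h0 | hpos
    · have : S = ∅ := Finset.card_eq_zero.mp h0
      simp [hA', this]
    · have hcpos : (0 : ℝ) < S.card := Nat.cast_pos.mpr hpos
      have := hres' S hc
      rw [norm_smul, norm_inv, Real.norm_natCast] at this
      calc ‖A'‖ = (S.card : ℝ) * ((S.card : ℝ)⁻¹ * ‖A'‖) := by
            field_simp
        _ ≤ (S.card : ℝ) * B := by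
            exact mul_le_mul_of_nonneg_left this hcpos.le
  have hclt : (S.card : ℝ) < n := by nlinarith
  have hncpos : (0 : ℝ) < (n : ℝ) - S.card := by linarith
  have hnorm : ((n : ℝ) - S.card) * ‖ybar - ybar'‖ ≤ 2 * (S.card : ℝ) * B := by
    have : ‖((n : ℝ) - S.card) • (ybar - ybar')‖ = ((n : ℝ) - S.card) * ‖ybar - ybar'‖ := by
      rw [norm_smul, Real.norm_eq_abs, abs_of_pos hncpos]
    rw [← this, key]
    calc ‖A - A'‖ ≤ ‖A‖ + ‖A'‖ := norm_sub_le _ _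
      _ ≤ 2 * (S.card : ℝ) * B := by linarith
  have hD : (0 : ℝ) ≤ ‖ybar - ybar'‖ := norm_nonneg _
  have h12 : (0 : ℝ) < 1 - 2 * η := by linarith
  rw [le_div_iff₀ h12]
  have hcB : (S.card : ℝ) * B ≤ 2 * η * n * B := mul_le_mul_of_nonneg_right hc hB
  have e0 : (n : ℝ) * (1 - 2 * η) ≤ (n : ℝ) - S.card := by nlinarith
  have e1 := mul_le_mul_of_nonneg_right e0 hD
  have e2 : (n : ℝ) * (1 - 2 * η) * ‖ybar - ybar'‖ ≤ 2 * S.card * B :=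
    le_trans e1 hnorm
  have e3 : 2 * (S.card : ℝ) * B ≤ (n : ℝ) * (4 * η * B) := by linarith [hcB]
  have e4 : (n : ℝ) * ((1 - 2 * η) * ‖ybar - ybar'‖) ≤ (n : ℝ) * (4 * η * B) := by
    calc (n : ℝ) * ((1 - 2 * η) * ‖ybar - ybar'‖)
        = (n : ℝ) * (1 - 2 * η) * ‖ybar - ybar'‖ := by ring
      _ ≤ (n : ℝ) * (4 * η * B) := le_trans e2 e3
  have e5 := le_of_mul_le_mul_left e4 hnpos
  linarith [e5]
end
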